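/- arXiv:1205.6536 — 2 statements merged into one kernel-verified Lean document; each statement's English description precedes it below -/
import Mathlib

section
/- Let C ∈ ℂ^{k×k} and let T = [[J_k(λ), C], [0, J_k(λ)]] ∈ ℂ^{2k×2k} be block upper triangular. If c_{k,1} = 0 and Ce₁ = 0, the eigenspace of T for λ is span{(e₁,0), (0,e₁)}; if c_{k,1} = 0 and Ce₁ ≠ 0, it is span{(e₁,0), (N_k C e₁, e₁)}; if c_{k,1} ≠ 0, it is span{(e₁,0)}. Here N_kᵀ = λI_k − J_k(λ). -/
/-!
Write `S = J_k(0)`: it shifts coordinates up, so its kernel is `ℂ e₁`, the last coordinate of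
every `S x` vanishes, and `S (Sᵀ u) = u` whenever `u` has vanishing last coordinate. Since
`T - λ = [[S, C], [0, S]]`, a kernel vector `(x, y)` has `y = b e₁` and `S x = -b C e₁`. When
`c_{k,1} ≠ 0` the vector `C e₁` is not in the range of `S`, so `b = 0`; otherwise
`p = N C e₁ = -Sᵀ C e₁` solves `S p = -C e₁`, and `x - b p ∈ ℂ e₁`.
-/

open Matrix

/-- The `k × k` Jordan block with eigenvalue `x`. -/
def jordanBlock (k : ℕ) (x : ℂ) : Matrix (Fin k) (Fin k) ℂ :=
  Matrix.of fun i j => if i = j then x else if (i : ℕ) + 1 = (j : ℕ) then 1 else 0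

section BlockTriangular

variable {K m : Type*} [Field K] [Fintype m] {A : Matrix m m K} {e : m → K}

theorem sum_elim_mem_ker_fromBlocks_iff {n : Type*} [Fintype n] {B : Matrix m n K}
    {D : Matrix n n K} {x : m → K} {y : n → K} :
    Sum.elim x y ∈ LinearMap.ker (fromBlocks A B 0 D).mulVecLin ↔
      A *ᵥ x + B *ᵥ y = 0 ∧ D *ᵥ y = 0 := by
  rw [LinearMap.mem_ker, mulVecLin_apply, fromBlocks_mulVec, ← Sum.elim_zero_zero,
    Sum.elim_eq_iff]
  simp

theorem ker_fromBlocks_eq_span_pair {B : Matrix m m K} (hA : LinearMap.ker A.mulVecLin = K ∙ e)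
    {p : m → K} (hp : A *ᵥ p = -(B *ᵥ e)) :
    LinearMap.ker (fromBlocks A B 0 A).mulVecLin =
      Submodule.span K {Sum.elim e 0, Sum.elim p e} := by
  have he : A *ᵥ e = 0 := by
    simpa using hA.ge (Submodule.mem_span_singleton_self e)
  apply le_antisymm
  · intro v hv
    rw [← Sum.elim_comp_inl_inr v, sum_elim_mem_ker_fromBlocks_iff] at hv
    obtain ⟨hx, hy⟩ := hv
    obtain ⟨b, hb⟩ := Submodule.mem_span_singleton.mp (hA.le hy)
    have hxp : v ∘ Sum.inl - b • p ∈ LinearMap.ker A.mulVecLin := by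
      simp [mulVec_sub, mulVec_smul, hp, ← hb] at hx ⊢
      linear_combination hx
    obtain ⟨a, ha⟩ := Submodule.mem_span_singleton.mp (hA.le hxp)
    refine Submodule.mem_span_pair.mpr ⟨a, b, ?_⟩
    rw [← Sum.elim_comp_inl_inr v, ← hb, sub_eq_iff_eq_add.mp ha.symm]
    ext (i | i) <;> simp
  · rw [Submodule.span_le, Set.insert_subset_iff, Set.singleton_subset_iff]
    simp only [SetLike.mem_coe, sum_elim_mem_ker_fromBlocks_iff, he, hp, mulVec_zero]
    simp

theorem ker_fromBlocks_eq_span_singleton {B : Matrix m m K}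
    (hA : LinearMap.ker A.mulVecLin = K ∙ e) (hBe : B *ᵥ e ∉ LinearMap.range A.mulVecLin) :
    LinearMap.ker (fromBlocks A B 0 A).mulVecLin = K ∙ Sum.elim e 0 := by
  have he : A *ᵥ e = 0 := by
    simpa using hA.ge (Submodule.mem_span_singleton_self e)
  apply le_antisymm
  · intro v hv
    rw [← Sum.elim_comp_inl_inr v, sum_elim_mem_ker_fromBlocks_iff] at hv
    obtain ⟨hx, hy⟩ := hv
    obtain ⟨b, hb⟩ := Submodule.mem_span_singleton.mp (hA.le hy)
    obtain rfl : b = 0 := by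
      by_contra hb0
      refine hBe ⟨-b⁻¹ • v ∘ Sum.inl, ?_⟩
      rw [← hb, mulVec_smul, add_eq_zero_iff_eq_neg] at hx
      rw [mulVecLin_apply, mulVec_smul, hx, smul_neg, smul_smul, neg_mul, inv_mul_cancel₀ hb0,
        neg_smul, one_smul, neg_neg]
    rw [← hb, zero_smul, mulVec_zero, add_zero] at hx
    obtain ⟨a, ha⟩ := Submodule.mem_span_singleton.mp (hA.le hx)
    refine Submodule.mem_span_singleton.mpr ⟨a, ?_⟩
    rw [← Sum.elim_comp_inl_inr v, ← hb, ← ha]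
    ext (i | i) <;> simp
  · rw [Submodule.span_singleton_le_iff_mem, sum_elim_mem_ker_fromBlocks_iff]
    simp [he]

end BlockTriangular

section NilpotentJordanBlock

variable {k : ℕ}

theorem jordanBlock_sub_smul_one (lam : ℂ) : jordanBlock k lam - lam • 1 = jordanBlock k 0 := by
  ext i j
  by_cases h : i = j <;> simp [jordanBlock, one_apply, h]

theorem jordanBlock_zero_apply (i j : Fin k) :
    jordanBlock k 0 i j = if (i : ℕ) + 1 = j then 1 else 0 := by
  by_cases h : i = j <;> simp [jordanBlock, h]

theorem jordanBlock_zero_mulVec_apply (w : Fin k → ℂ) (i : Fin k) :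
    (jordanBlock k 0 *ᵥ w) i = if h : (i : ℕ) + 1 < k then w ⟨i + 1, h⟩ else 0 := by
  simp only [mulVec, dotProduct, jordanBlock_zero_apply, ite_mul, one_mul, zero_mul]
  split_ifs with h
  · rw [Fintype.sum_eq_single ⟨i + 1, h⟩ fun j hj => if_neg fun hij => hj (Fin.ext hij.symm)]
    simp
  · exact Finset.sum_eq_zero fun j _ => if_neg (by omega)

theorem transpose_jordanBlock_zero_mulVec_apply_succ (u : Fin k → ℂ) (i : Fin k)
    (h : (i : ℕ) + 1 < k) : ((jordanBlock k 0)ᵀ *ᵥ u) ⟨i + 1, h⟩ = u i := by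
  simp only [mulVec, dotProduct, transpose_apply, jordanBlock_zero_apply, ite_mul, one_mul,
    zero_mul]
  rw [Fintype.sum_eq_single i fun j hj => if_neg fun hij => hj (Fin.ext (by simpa using hij))]
  simp

theorem jordanBlock_zero_mulVec_apply_last (hk : 0 < k) (w : Fin k → ℂ) :
    (jordanBlock k 0 *ᵥ w) ⟨k - 1, Nat.sub_one_lt_of_lt hk⟩ = 0 := by
  rw [jordanBlock_zero_mulVec_apply, dif_neg (by simp; omega)]

theorem jordanBlock_zero_mulVec_transpose_mulVec (hk : 0 < k) {u : Fin k → ℂ}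
    (hu : u ⟨k - 1, Nat.sub_one_lt_of_lt hk⟩ = 0) :
    jordanBlock k 0 *ᵥ ((jordanBlock k 0)ᵀ *ᵥ u) = u := by
  ext i
  rw [jordanBlock_zero_mulVec_apply]
  split_ifs with h
  · exact transpose_jordanBlock_zero_mulVec_apply_succ u i h
  · rw [show i = ⟨k - 1, by omega⟩ from Fin.ext (by simp; omega), hu]

theorem ker_jordanBlock_zero (hk : 0 < k) :
    LinearMap.ker (jordanBlock k 0).mulVecLin = ℂ ∙ Pi.single ⟨0, hk⟩ 1 := by
  apply le_antisymm
  · intro w hw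
    rw [LinearMap.mem_ker, mulVecLin_apply] at hw
    refine Submodule.mem_span_singleton.mpr ⟨w ⟨0, hk⟩, funext fun j => ?_⟩
    obtain rfl | hj := eq_or_ne j ⟨0, hk⟩
    · simp
    have hj0 : (j : ℕ) ≠ 0 := fun h => hj (Fin.ext h)
    have hwj := congrFun hw ⟨j - 1, by omega⟩
    rw [jordanBlock_zero_mulVec_apply, dif_pos (by simp; omega)] at hwj
    rw [show j = ⟨j - 1 + 1, by omega⟩ from Fin.ext (by simp; omega)] at hj ⊢
    simp [hj, hwj]
  · rw [Submodule.span_singleton_le_iff_mem, LinearMap.mem_ker, mulVecLin_apply]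
    ext i
    rw [jordanBlock_zero_mulVec_apply]
    split_ifs with h
    · simp [Fin.ext_iff]
    · rfl

end NilpotentJordanBlock

/-- Eigenspace of `T = [[J_k(λ), C], [0, J_k(λ)]]` for `λ`, in the three cases
`c_{k,1} = 0 ∧ Ce₁ = 0`, `c_{k,1} = 0 ∧ Ce₁ ≠ 0`, and `c_{k,1} ≠ 0`. -/
theorem eigenspace_two_jordan_blocks {k : ℕ} (hk : 0 < k)
    (lam : ℂ) (C : Matrix (Fin k) (Fin k) ℂ) :
    let T : Matrix (Fin k ⊕ Fin k) (Fin k ⊕ Fin k) ℂ :=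
      Matrix.fromBlocks (jordanBlock k lam) C 0 (jordanBlock k lam)
    let e1 : Fin k → ℂ := Pi.single (⟨0, hk⟩ : Fin k) 1
    let N : Matrix (Fin k) (Fin k) ℂ :=
      (lam • (1 : Matrix (Fin k) (Fin k) ℂ) - jordanBlock k lam)ᵀ
    let E := LinearMap.ker
      ((T - lam • (1 : Matrix (Fin k ⊕ Fin k) (Fin k ⊕ Fin k) ℂ)).mulVecLin)
    (C ⟨k - 1, by omega⟩ ⟨0, hk⟩ = 0 → C.mulVec e1 = 0 →
      E = Submodule.span ℂ
        {Sum.elim e1 (0 : Fin k → ℂ), Sum.elim (0 : Fin k → ℂ) e1}) ∧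
    (C ⟨k - 1, by omega⟩ ⟨0, hk⟩ = 0 → C.mulVec e1 ≠ 0 →
      E = Submodule.span ℂ
        {Sum.elim e1 (0 : Fin k → ℂ), Sum.elim (N.mulVec (C.mulVec e1)) e1}) ∧
    (C ⟨k - 1, by omega⟩ ⟨0, hk⟩ ≠ 0 →
      E = Submodule.span ℂ {Sum.elim e1 (0 : Fin k → ℂ)}) := by
  intro T e1 N E
  have hE : E = LinearMap.ker (fromBlocks (jordanBlock k 0) C 0 (jordanBlock k 0)).mulVecLin := by
    rw [← jordanBlock_sub_smul_one lam]
    simp only [E, T, sub_eq_add_neg, fromBlocks_neg, fromBlocks_add, ← fromBlocks_one,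
      fromBlocks_smul, smul_zero, neg_zero, add_zero]
  have hN : N = -(jordanBlock k 0)ᵀ := by
    rw [← jordanBlock_sub_smul_one lam, ← transpose_neg, neg_sub]
  have hCe1 : (C *ᵥ e1) ⟨k - 1, by omega⟩ = C ⟨k - 1, by omega⟩ ⟨0, hk⟩ := by
    simp [e1, mulVec_single]
  have hpair (hc : C ⟨k - 1, by omega⟩ ⟨0, hk⟩ = 0) :
      E = Submodule.span ℂ {Sum.elim e1 0, Sum.elim (N *ᵥ (C *ᵥ e1)) e1} := by
    rw [hE]
    refine ker_fromBlocks_eq_span_pair (ker_jordanBlock_zero hk) ?_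
    rw [hN, neg_mulVec, mulVec_neg, jordanBlock_zero_mulVec_transpose_mulVec hk (hCe1.trans hc)]
  refine ⟨fun hc hCe => ?_, fun hc _ => hpair hc, fun hc => ?_⟩
  · simpa [hCe] using hpair hc
  · rw [hE]
    refine ker_fromBlocks_eq_span_singleton (ker_jordanBlock_zero hk) fun ⟨x, hx⟩ => hc ?_
    rw [← hCe1, ← hx, mulVecLin_apply, jordanBlock_zero_mulVec_apply_last hk]
end

section
/- Let A ∈ ℂ^{n×n} have eigenvalue λ₀ with algebraic multiplicity 2k+1 and geometric multiplicity 1, with left and right Jordan chains u₁,…,u_{2k+1} and v₁,…,v_{2k+1}. Set U = [u₁ … u_k], V = [v₁ … v_k], r = u_{k+1}/(v_{k+1}*u_{k+1}), and let R*, L satisfy R*V = U*L = I_k. Then the characteristic polynomial of Â = A + (λ₁ − λ₀)(V R* + v_{k+1} r* + L U*) equals that of A multiplied by ((λ₁ − x)/(λ₀ − x))^{2k+1}. -/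
open Matrix Polynomial

/-- Matrix whose columns are the chain vectors `w 1, …, w k`. -/
def chainMat {n : ℕ} (k : ℕ) (w : ℕ → Fin n → ℂ) : Matrix (Fin n) (Fin k) ℂ :=
  Matrix.of fun s i => w ((i : ℕ) + 1) s

/-!
Write `⟨u_i, v_j⟩ = u_i* v_j`. Testing the chain relations against each other shows that
`⟨u_i, v_j⟩` depends only on `i + j` and vanishes for `i + j ≤ 2k+1`. If the middle value
`⟨u_{k+1}, v_{k+1}⟩ = ⟨u_1, v_{2k+1}⟩` were `0`, then `u_1*` would kill the whole chain `v`, which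
spans the generalized eigenspace (its dimension is the algebraic multiplicity `2k+1`), and also
the range of `A - λ₀`, which contains the Fitting complement of that eigenspace; so `u_1 = 0`.

The update is `Â - A = (λ₁ - λ₀) M N` with `M = [V v_{k+1} L]` and `N = [R*; r*; U*]`, so for `x`
outside the spectrum the determinant lemma gives
`det (x - Â) = det (x - A) · det (1 - (λ₁ - λ₀) N (x - A)⁻¹ M)`. The resolvent acts on a Jordan
chain by `(x - A)⁻¹ v_j = (x - λ₀)⁻¹ (v_j + (x - A)⁻¹ v_{j-1})`, and with the biorthogonality
relations and `R* V = U* L = 1` this makes `N (x - A)⁻¹ M` triangular with diagonal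
`(x - λ₀)⁻¹`. Both sides of the identity therefore agree at all but finitely many points.
-/

namespace Matrix

variable {ι : Type*} [Fintype ι]

theorem of_mul_mul_transpose_of_apply {R o : Type*} [CommSemiring R] (f g : o → ι → R)
    (S : Matrix ι ι R) (p q : o) : (of f * S * (of g)ᵀ) p q = f p ⬝ᵥ (S *ᵥ g q) := by
  rw [mul_apply', dotProduct_mulVec]
  rfl

variable [DecidableEq ι]

theorem BlockTriangular.det_eq_prod_diag {R α : Type*} [CommRing R] [LinearOrder α]
    {M : Matrix ι ι R} {b : ι → α} (hM : M.BlockTriangular b) (hb : Function.Injective b) :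
    M.det = ∏ i, M i i := by
  let : LinearOrder ι := LinearOrder.lift' b hb
  exact det_of_isUpperTriangular hM

theorem BlockTriangular.det_one_sub_smul {R α : Type*} [CommRing R] [LinearOrder α]
    {T : Matrix ι ι R} {b : ι → α} (hT : T.BlockTriangular b) (hb : Function.Injective b)
    {g : R} (hdiag : ∀ i, T i i = g) (c : R) :
    (1 - c • T).det = (1 - c * g) ^ Fintype.card ι := by
  have h : (1 - c • T).BlockTriangular b :=
    blockTriangular_one.sub fun i j hij => by rw [smul_apply, hT hij, smul_zero]
  rw [h.det_eq_prod_diag hb]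
  simp [hdiag]

theorem toLin'_sub_smul_one_pow {K : Type*} [CommRing K] (A : Matrix ι ι K) (μ : K) (p : ℕ) :
    (A.toLin' - μ • 1) ^ p = ((A - μ • 1) ^ p).toLin' := by
  rw [toLin'_pow, map_sub, map_smul, toLin'_one]
  rfl

theorem inv_scalar_sub_eq {K : Type*} [Field K] (A : Matrix ι ι K) {x μ : K} (hx : x ≠ μ)
    (hS : IsUnit (scalar ι x - A).det) :
    (scalar ι x - A)⁻¹ = (x - μ)⁻¹ • (1 + (scalar ι x - A)⁻¹ * (A - μ • 1)) := by
  have h : (x - μ) • (1 : Matrix ι ι K) = (scalar ι x - A) + (A - μ • 1) := by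
    rw [sub_smul, scalar_apply, smul_one_eq_diagonal]
    abel
  rw [eq_inv_smul_iff₀ (sub_ne_zero.mpr hx)]
  calc (x - μ) • (scalar ι x - A)⁻¹ = (scalar ι x - A)⁻¹ * ((x - μ) • 1) := by
        rw [Matrix.mul_smul, Matrix.mul_one]
    _ = 1 + (scalar ι x - A)⁻¹ * (A - μ • 1) := by
        rw [h, Matrix.mul_add, nonsing_inv_mul _ hS]

end Matrix

/-- Indexed from `1`; a left chain `u` of `A` is encoded as the Jordan chain `star ∘ u` of `Aᵀ`. -/
def Matrix.IsJordanChain {K ι : Type*} [Semiring K] [Fintype ι] (A : Matrix ι ι K) (μ : K)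
    (v : ℕ → ι → K) (m : ℕ) : Prop :=
  A *ᵥ v 1 = μ • v 1 ∧ ∀ j, 1 ≤ j → j + 1 ≤ m → A *ᵥ v (j + 1) = μ • v (j + 1) + v j

namespace Matrix.IsJordanChain

section CommRing

variable {K ι : Type*} [CommRing K] [Fintype ι] {A : Matrix ι ι K} {μ : K} {a v : ℕ → ι → K}
  {m : ℕ}

theorem mono (hv : A.IsJordanChain μ v m) {m' : ℕ} (h : m' ≤ m) : A.IsJordanChain μ v m' :=
  ⟨hv.1, fun j hj hjm => hv.2 j hj (hjm.trans h)⟩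

theorem dotProduct_one_eq_zero (ha : Aᵀ.IsJordanChain μ a m) (hv : A.IsJordanChain μ v m)
    {i : ℕ} (hi : 1 ≤ i) (him : i + 1 ≤ m) : a i ⬝ᵥ v 1 = 0 := by
  have h := dotProduct_mulVec (a (i + 1)) A (v 1)
  rw [hv.1, ← mulVec_transpose, ha.2 i hi him] at h
  simp only [dotProduct_smul, add_dotProduct, smul_dotProduct, smul_eq_mul] at h
  linear_combination -h

theorem dotProduct_succ (ha : Aᵀ.IsJordanChain μ a m) (hv : A.IsJordanChain μ v m)
    {i j : ℕ} (hi : 1 ≤ i) (him : i + 1 ≤ m) (hj : 1 ≤ j) (hjm : j + 1 ≤ m) :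
    a i ⬝ᵥ v (j + 1) = a (i + 1) ⬝ᵥ v j := by
  have h := dotProduct_mulVec (a (i + 1)) A (v (j + 1))
  rw [hv.2 j hj hjm, ← mulVec_transpose, ha.2 i hi him] at h
  simp only [dotProduct_add, dotProduct_smul, add_dotProduct, smul_dotProduct, smul_eq_mul] at h
  linear_combination -h

theorem dotProduct_eq_dotProduct_one (ha : Aᵀ.IsJordanChain μ a m)
    (hv : A.IsJordanChain μ v m) {i : ℕ} (hi : 1 ≤ i) :
    ∀ j, 1 ≤ j → i + j ≤ m + 1 → a i ⬝ᵥ v j = a (i + j - 1) ⬝ᵥ v 1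
  | 0, h, _ => absurd h (by omega)
  | 1, _, _ => by simp
  | j + 2, _, h => by
    rw [ha.dotProduct_succ hv hi (by omega) (by omega) (by omega),
      ha.dotProduct_eq_dotProduct_one hv (by omega) (j + 1) (by omega) (by omega)]
    congr 2
    omega

theorem dotProduct_eq_zero_of_add_le (ha : Aᵀ.IsJordanChain μ a m)
    (hv : A.IsJordanChain μ v m) {i j : ℕ} (hi : 1 ≤ i) (hj : 1 ≤ j) (hij : i + j ≤ m) :
    a i ⬝ᵥ v j = 0 := by
  rw [ha.dotProduct_eq_dotProduct_one hv hi j hj (by omega),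
    ha.dotProduct_one_eq_zero hv (by omega) (by omega)]

variable [DecidableEq ι]

theorem sub_smul_one_mulVec_one (hv : A.IsJordanChain μ v m) : (A - μ • 1) *ᵥ v 1 = 0 := by
  rw [sub_mulVec, hv.1, smul_mulVec, one_mulVec, sub_self]

theorem sub_smul_one_mulVec_succ (hv : A.IsJordanChain μ v m) {j : ℕ} (hj : 1 ≤ j)
    (hjm : j + 1 ≤ m) : (A - μ • 1) *ᵥ v (j + 1) = v j := by
  rw [sub_mulVec, hv.2 j hj hjm, smul_mulVec, one_mulVec, add_sub_cancel_left]

theorem pow_mulVec_add (hv : A.IsJordanChain μ v m) {i : ℕ} (hi : 1 ≤ i) :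
    ∀ p, i + p ≤ m → (A - μ • 1) ^ p *ᵥ v (i + p) = v i
  | 0, _ => by simp
  | p + 1, h => by
    rw [pow_succ, ← mulVec_mulVec, ← add_assoc,
      hv.sub_smul_one_mulVec_succ (j := i + p) (by omega) h, hv.pow_mulVec_add hi p (by omega)]

theorem pow_mulVec_eq_zero (hv : A.IsJordanChain μ v m) {i p : ℕ} (hi : 1 ≤ i) (hip : i ≤ p)
    (him : i ≤ m) : (A - μ • 1) ^ p *ᵥ v i = 0 := by
  obtain ⟨q, rfl⟩ := Nat.exists_eq_add_of_le' hip
  obtain ⟨i, rfl⟩ := Nat.exists_eq_add_of_le' hi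
  rw [pow_add, ← mulVec_mulVec, pow_succ', ← mulVec_mulVec, add_comm i 1,
    hv.pow_mulVec_add le_rfl i (by omega), hv.sub_smul_one_mulVec_one, mulVec_zero]

end CommRing

section Field

variable {K ι : Type*} [Field K] [Fintype ι] [DecidableEq ι] {A : Matrix ι ι K} {μ : K}
  {a v : ℕ → ι → K} {m : ℕ}

theorem linearIndependent (hv : A.IsJordanChain μ v m) (hv1 : v 1 ≠ 0) :
    LinearIndependent K fun i : Fin m => v (i + 1) := by
  induction m with
  | zero => exact linearIndependent_empty_type
  | succ m ih =>
    have hsnoc : (fun i : Fin (m + 1) => v (i + 1)) =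
        Fin.snoc (fun i : Fin m => v (i + 1)) (v (m + 1)) := by
      funext i
      refine Fin.lastCases ?_ (fun i => ?_) i <;> simp
    rw [hsnoc, linearIndependent_finSnoc]
    refine ⟨ih (hv.mono m.le_succ), fun hmem => hv1 ?_⟩
    have hker : Submodule.span K (Set.range fun i : Fin m => v (i + 1)) ≤
        LinearMap.ker ((A - μ • 1) ^ m).mulVecLin := by
      rw [Submodule.span_le]
      rintro _ ⟨i, rfl⟩
      exact hv.pow_mulVec_eq_zero (by omega) (by omega) (by omega)
    have := hker hmem
    rwa [LinearMap.mem_ker, mulVecLin_apply, add_comm, hv.pow_mulVec_add le_rfl m (by omega)]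
      at this

theorem span_eq_maxGenEigenspace (hv : A.IsJordanChain μ v m) (hv1 : v 1 ≠ 0)
    (hm : A.charpoly.rootMultiplicity μ = m) :
    Submodule.span K (Set.range fun i : Fin m => v (i + 1)) =
      Module.End.maxGenEigenspace A.toLin' μ := by
  apply Submodule.eq_of_le_of_finrank_le
  · rw [Submodule.span_le]
    rintro _ ⟨i, rfl⟩
    rw [SetLike.mem_coe, Module.End.mem_maxGenEigenspace]
    refine ⟨i + 1, ?_⟩
    rw [toLin'_sub_smul_one_pow, toLin'_apply]
    exact hv.pow_mulVec_eq_zero (by omega) le_rfl (by omega)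
  · rw [LinearMap.finrank_maxGenEigenspace_eq, charpoly_toLin', hm,
      finrank_span_eq_card (hv.linearIndependent hv1), Fintype.card_fin]

theorem eq_zero_of_forall_dotProduct_eq_zero (hv : A.IsJordanChain μ v m) (hv1 : v 1 ≠ 0)
    (hm : A.charpoly.rootMultiplicity μ = m) {w : ι → K} (hw : w ᵥ* A = μ • w)
    (hwv : ∀ j, 1 ≤ j → j ≤ m → w ⬝ᵥ v j = 0) : w = 0 := by
  refine dotProduct_eq_zero w fun z => ?_
  have hz : z ∈ Module.End.maxGenEigenspace A.toLin' μ ⊔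
      ⨅ p : ℕ, LinearMap.range ((A.toLin' - μ • 1) ^ p) := by
    rw [← Module.End.iSup_genEigenspace_eq]
    simp only [Module.End.genEigenspace_nat]
    rw [(LinearMap.isCompl_iSup_ker_pow_iInf_range_pow _).sup_eq_top]
    trivial
  obtain ⟨z₁, hz₁, z₂, hz₂, rfl⟩ := Submodule.mem_sup.mp hz
  have h₁ : w ⬝ᵥ z₁ = 0 := by
    rw [← hv.span_eq_maxGenEigenspace hv1 hm] at hz₁
    clear hz
    induction hz₁ using Submodule.span_induction with
    | mem _ h => obtain ⟨i, rfl⟩ := h; exact hwv _ (by omega) (by omega)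
    | zero => exact dotProduct_zero w
    | add _ _ _ _ h h' => rw [dotProduct_add, h, h', add_zero]
    | smul c _ _ h => rw [dotProduct_smul, h, smul_zero]
  have h₂ : w ⬝ᵥ z₂ = 0 := by
    obtain ⟨y, rfl⟩ := (Submodule.mem_iInf _).mp hz₂ 1
    rw [toLin'_sub_smul_one_pow, pow_one, toLin'_apply, dotProduct_mulVec, vecMul_sub, hw,
      vecMul_smul, vecMul_one, sub_self, zero_dotProduct]
  rw [dotProduct_add, h₁, h₂, add_zero]

theorem dotProduct_ne_zero_of_add_eq (ha : Aᵀ.IsJordanChain μ a m)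
    (hv : A.IsJordanChain μ v m) (ha1 : a 1 ≠ 0) (hv1 : v 1 ≠ 0)
    (hm : A.charpoly.rootMultiplicity μ = m) {i j : ℕ} (hi : 1 ≤ i) (hj : 1 ≤ j)
    (hij : i + j = m + 1) : a i ⬝ᵥ v j ≠ 0 := by
  intro h
  have hm1 : a 1 ⬝ᵥ v m = a i ⬝ᵥ v j := by
    rw [ha.dotProduct_eq_dotProduct_one hv le_rfl m (by omega) (by omega),
      ha.dotProduct_eq_dotProduct_one hv hi j hj (by omega)]
    congr 2
    omega
  refine ha1 (hv.eq_zero_of_forall_dotProduct_eq_zero hv1 hm ?_ fun l hl hlm => ?_)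
  · rw [← mulVec_transpose, ha.1]
  · rcases hlm.lt_or_eq with hlm | rfl
    · exact ha.dotProduct_eq_zero_of_add_le hv le_rfl hl (by omega)
    · rw [hm1, h]

theorem dotProduct_inv_mulVec (hv : A.IsJordanChain μ v m) {x : K} (hx : x ≠ μ)
    (hS : IsUnit (scalar ι x - A).det) {w : ι → K} :
    ∀ j, 1 ≤ j → j ≤ m → (∀ l, 1 ≤ l → l < j → w ⬝ᵥ v l = 0) →
      w ⬝ᵥ ((scalar ι x - A)⁻¹ *ᵥ v j) = (x - μ)⁻¹ * (w ⬝ᵥ v j)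
  | 0, h, _, _ => absurd h (by omega)
  | 1, _, _, _ => by
    rw [inv_scalar_sub_eq A hx hS, smul_mulVec, add_mulVec, one_mulVec, ← mulVec_mulVec,
      hv.sub_smul_one_mulVec_one, mulVec_zero, add_zero, dotProduct_smul, smul_eq_mul]
  | j + 2, _, hjm, hw => by
    rw [inv_scalar_sub_eq A hx hS, smul_mulVec, add_mulVec, one_mulVec, ← mulVec_mulVec,
      hv.sub_smul_one_mulVec_succ (by omega) hjm, dotProduct_smul, dotProduct_add,
      hv.dotProduct_inv_mulVec hx hS (j + 1) (by omega) (by omega)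
        fun l hl hlj => hw l hl (by omega),
      hw (j + 1) (by omega) (by omega), mul_zero, add_zero, smul_eq_mul]

theorem dotProduct_inv_mulVec_of_transpose (ha : Aᵀ.IsJordanChain μ a m) {x : K} (hx : x ≠ μ)
    (hS : IsUnit (scalar ι x - A).det) {b : ι → K} {j : ℕ} (hj : 1 ≤ j) (hjm : j ≤ m)
    (hb : ∀ l, 1 ≤ l → l < j → a l ⬝ᵥ b = 0) :
    a j ⬝ᵥ ((scalar ι x - A)⁻¹ *ᵥ b) = (x - μ)⁻¹ * (a j ⬝ᵥ b) := by
  have hT : (scalar ι x - A)ᵀ = scalar ι x - Aᵀ := by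
    rw [transpose_sub, scalar_apply, diagonal_transpose]
  have hST : IsUnit (scalar ι x - Aᵀ).det := by rwa [← hT, det_transpose]
  rw [dotProduct_mulVec, ← mulVec_transpose, transpose_nonsing_inv, hT, dotProduct_comm,
    ha.dotProduct_inv_mulVec hx hST j hj hjm fun l hl hlj => by rw [dotProduct_comm, hb l hl hlj],
    dotProduct_comm]

end Field

end Matrix.IsJordanChain

theorem Polynomial.eq_of_eval_eq_of_not_isRoot {K : Type*} [Field K] [Infinite K] {p q f : K[X]}
    (hf : f ≠ 0) (h : ∀ x, ¬ f.IsRoot x → p.eval x = q.eval x) : p = q :=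
  eq_of_infinite_eval_eq p q ((finite_setOfPred_isRoot hf).infinite_compl.mono fun x hx => h x hx)

theorem Matrix.charpoly_mul_pow_eq_of_det_eq {K ι : Type*} [Field K] [Infinite K] [Fintype ι]
    [DecidableEq ι] {A B : Matrix ι ι K} {μ ν : K} {m : ℕ} (hμ : A.charpoly.IsRoot μ)
    (h : ∀ x, x ≠ μ → IsUnit (scalar ι x - A).det →
      (scalar ι x - B).det = (scalar ι x - A).det * (1 - (ν - μ) * (x - μ)⁻¹) ^ m) :
    B.charpoly * (X - C μ) ^ m = A.charpoly * (X - C ν) ^ m := by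
  refine eq_of_eval_eq_of_not_isRoot A.charpoly_monic.ne_zero fun x hx => ?_
  have hxμ : x ≠ μ := by
    rintro rfl
    exact hx hμ
  have hS : IsUnit (scalar ι x - A).det := by
    rw [← eval_charpoly]
    exact isUnit_iff_ne_zero.mpr hx
  simp only [eval_mul, eval_pow, eval_sub, eval_X, eval_C, eval_charpoly]
  rw [h x hxμ hS, mul_assoc, ← mul_pow]
  congr 2
  field_simp [sub_ne_zero.mpr hxμ]
  ring

theorem dotProduct_chainMat_of_mul_eq_one {n k : ℕ} {w : ℕ → Fin n → ℂ}
    {W : Matrix (Fin k) (Fin n) ℂ} (hW : W * chainMat k w = 1) (i : Fin k) {l : ℕ} (hl : 1 ≤ l)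
    (hlk : l ≤ k) : W i ⬝ᵥ w l = if (i : ℕ) + 1 = l then 1 else 0 := by
  obtain ⟨l, rfl⟩ := Nat.exists_eq_add_of_le' hl
  have h := congrFun (congrFun hW i) ⟨l, by omega⟩
  rw [mul_apply', one_apply] at h
  exact h.trans (by simp [Fin.ext_iff])

section OddShift

variable {n k : ℕ}

def oddShiftCol (v : ℕ → Fin n → ℂ) (L : Matrix (Fin n) (Fin k) ℂ) :
    (Fin k ⊕ Unit) ⊕ Fin k → Fin n → ℂ
  | .inl (.inl j) => v (j + 1)
  | .inl (.inr _) => v (k + 1)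
  | .inr j => Lᵀ j

def oddShiftRow (u : ℕ → Fin n → ℂ) (R : Matrix (Fin n) (Fin k) ℂ) (r : Fin n → ℂ) :
    (Fin k ⊕ Unit) ⊕ Fin k → Fin n → ℂ
  | .inl (.inl i) => Rᴴ i
  | .inl (.inr _) => star r
  | .inr i => star (u (i + 1))

/-- The columns of `V` in order, then `v (k + 1)`, then the columns of `L` in reverse order: for
this order the matrix `N (x - A)⁻¹ M` is upper triangular. -/
def oddShiftKey (k : ℕ) : (Fin k ⊕ Unit) ⊕ Fin k → ℕ
  | .inl (.inl i) => i
  | .inl (.inr _) => k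
  | .inr i => 2 * k - i

theorem oddShiftKey_injective : Function.Injective (oddShiftKey k) := by
  rintro ((i | _) | i) ((j | _) | j) h <;> simp [oddShiftKey, Fin.ext_iff] at h ⊢ <;> omega

theorem oddShiftCol_mul_oddShiftRow (u v : ℕ → Fin n → ℂ) (R L : Matrix (Fin n) (Fin k) ℂ)
    (r : Fin n → ℂ) :
    (of (oddShiftCol v L))ᵀ * of (oddShiftRow u R r)
      = chainMat k v * Rᴴ + vecMulVec (v (k + 1)) (star r) + L * (chainMat k u)ᴴ := by
  ext s t
  simp [mul_apply, Fintype.sum_sum_type, oddShiftCol, oddShiftRow, chainMat, vecMulVec_apply]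

variable {A : Matrix (Fin n) (Fin n) ℂ} {μ x : ℂ} {u v : ℕ → Fin n → ℂ}
  {R L : Matrix (Fin n) (Fin k) ℂ} {r : Fin n → ℂ}

theorem oddShiftRow_mul_inv_mul_oddShiftCol_apply
    (hv : A.IsJordanChain μ v (2 * k + 1))
    (hu : Aᵀ.IsJordanChain μ (fun i => star (u i)) (2 * k + 1))
    (hR : Rᴴ * chainMat k v = 1) (hL : (chainMat k u)ᴴ * L = 1)
    (hr0 : ∀ l, 1 ≤ l → l ≤ k → star r ⬝ᵥ v l = 0) (hr1 : star r ⬝ᵥ v (k + 1) = 1)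
    (hx : x ≠ μ) (hS : IsUnit (scalar (Fin n) x - A).det) {p q : (Fin k ⊕ Unit) ⊕ Fin k}
    (hpq : oddShiftKey k q ≤ oddShiftKey k p) :
    (of (oddShiftRow u R r) * (scalar (Fin n) x - A)⁻¹ * (of (oddShiftCol v L))ᵀ) p q
      = if p = q then (x - μ)⁻¹ else 0 := by
  have hL' : ∀ (j : Fin k) l, 1 ≤ l → l ≤ k →
      star (u l) ⬝ᵥ Lᵀ j = if (j : ℕ) + 1 = l then 1 else 0 := by
    have : Lᵀ * chainMat k (fun i => star (u i)) = 1 := by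
      rw [← transpose_one, ← hL, transpose_mul]
      rfl
    intro j l hl hlk
    rw [dotProduct_comm]
    exact dotProduct_chainMat_of_mul_eq_one this j hl hlk
  have hu0 : ∀ i j, 1 ≤ i → 1 ≤ j → i + j ≤ 2 * k + 1 → star (u i) ⬝ᵥ v j = 0 :=
    fun i j => hu.dotProduct_eq_zero_of_add_le hv
  rw [of_mul_mul_transpose_of_apply]
  rcases p with ((i | _) | i) <;> rcases q with ((j | _) | j) <;>
    simp only [oddShiftKey] at hpq <;>
    simp only [oddShiftRow, oddShiftCol, reduceCtorEq, Sum.inl.injEq, Sum.inr.injEq, if_false,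
      if_true]
  · rw [hv.dotProduct_inv_mulVec hx hS (j + 1) (by omega) (by omega) fun l hl hlj => by
        rw [dotProduct_chainMat_of_mul_eq_one hR i hl (by omega), if_neg (by omega)],
      dotProduct_chainMat_of_mul_eq_one hR i (by omega) (by omega)]
    simp [Fin.ext_iff]
  · exact absurd hpq (by omega)
  · exact absurd hpq (by omega)
  · rw [hv.dotProduct_inv_mulVec hx hS (j + 1) (by omega) (by omega) fun l hl _ =>
        hr0 l hl (by omega), hr0 _ (by omega) (by omega), mul_zero]
  · rw [hv.dotProduct_inv_mulVec hx hS (k + 1) (by omega) (by omega) fun l hl _ =>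
        hr0 l hl (by omega), hr1, mul_one]
  · exact absurd hpq (by omega)
  · rw [hv.dotProduct_inv_mulVec hx hS (j + 1) (by omega) (by omega) fun l hl _ =>
        hu0 _ _ (by omega) hl (by omega), hu0 _ _ (by omega) (by omega) (by omega), mul_zero]
  · rw [hv.dotProduct_inv_mulVec hx hS (k + 1) (by omega) (by omega) fun l hl _ =>
        hu0 _ _ (by omega) hl (by omega), hu0 _ _ (by omega) (by omega) (by omega), mul_zero]
  · rw [hu.dotProduct_inv_mulVec_of_transpose hx hS (j := i + 1) (by omega) (by omega)
        fun l hl _ => by rw [hL' j l hl (by omega), if_neg (by omega)],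
      hL' j _ (by omega) (by omega)]
    simp [Fin.ext_iff, eq_comm]

theorem det_scalar_sub_add_oddShift
    (hv : A.IsJordanChain μ v (2 * k + 1))
    (hu : Aᵀ.IsJordanChain μ (fun i => star (u i)) (2 * k + 1))
    (hR : Rᴴ * chainMat k v = 1) (hL : (chainMat k u)ᴴ * L = 1)
    (hr0 : ∀ l, 1 ≤ l → l ≤ k → star r ⬝ᵥ v l = 0) (hr1 : star r ⬝ᵥ v (k + 1) = 1)
    (hx : x ≠ μ) (hS : IsUnit (scalar (Fin n) x - A).det) (c : ℂ) :
    (scalar (Fin n) x - (A + c • (chainMat k v * Rᴴ + vecMulVec (v (k + 1)) (star r)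
        + L * (chainMat k u)ᴴ))).det
      = (scalar (Fin n) x - A).det * (1 - c * (x - μ)⁻¹) ^ (2 * k + 1) := by
  set T := of (oddShiftRow u R r) * (scalar (Fin n) x - A)⁻¹ * (of (oddShiftCol v L))ᵀ
  have hentry : ∀ {p q}, oddShiftKey k q ≤ oddShiftKey k p →
      T p q = if p = q then (x - μ)⁻¹ else 0 :=
    oddShiftRow_mul_inv_mul_oddShiftCol_apply hv hu hR hL hr0 hr1 hx hS
  have hT : T.BlockTriangular (oddShiftKey k) := fun p q hqp => by
    rw [hentry hqp.le, if_neg (by rintro rfl; exact lt_irrefl _ hqp)]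
  have hdiag : ∀ p, T p p = (x - μ)⁻¹ := fun p => by rw [hentry le_rfl, if_pos rfl]
  have hsplit : scalar (Fin n) x - (A + c • (chainMat k v * Rᴴ + vecMulVec (v (k + 1)) (star r)
      + L * (chainMat k u)ᴴ))
      = (scalar (Fin n) x - A) + (-c • (of (oddShiftCol v L))ᵀ) * of (oddShiftRow u R r) := by
    rw [← oddShiftCol_mul_oddShiftRow, Matrix.smul_mul, neg_smul]
    abel
  rw [hsplit, det_add_mul _ _ hS, Matrix.mul_smul, neg_smul, ← sub_eq_add_neg,
    hT.det_one_sub_smul oddShiftKey_injective hdiag]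
  simp only [Fintype.card_sum, Fintype.card_fin, Fintype.card_unit]
  ring_nf

end OddShift

theorem odd_shift_charpoly_general {n k : ℕ}
    (A : Matrix (Fin n) (Fin n) ℂ) (lam0 lam1 : ℂ)
    (u v : ℕ → Fin n → ℂ)
    (halg : (Matrix.charpoly A).rootMultiplicity lam0 = 2 * k + 1)
    (hu0 : u 1 ≠ 0) (hv0 : v 1 ≠ 0)
    (hu1 : Matrix.vecMul (star (u 1)) A = lam0 • star (u 1))
    (huS : ∀ i, 1 ≤ i → i + 1 ≤ 2 * k + 1 →
      Matrix.vecMul (star (u (i + 1))) A = lam0 • star (u (i + 1)) + star (u i))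
    (hv1 : A.mulVec (v 1) = lam0 • v 1)
    (hvS : ∀ j, 1 ≤ j → j + 1 ≤ 2 * k + 1 →
      A.mulVec (v (j + 1)) = lam0 • v (j + 1) + v j)
    (R L : Matrix (Fin n) (Fin k) ℂ)
    (hR : Rᴴ * chainMat k v = 1)
    (hL : (chainMat k u)ᴴ * L = 1)
    (r : Fin n → ℂ)
    (hr : r = (dotProduct (star (v (k + 1))) (u (k + 1)))⁻¹ • u (k + 1)) :
    (A + (lam1 - lam0) • (chainMat k v * Rᴴ
        + Matrix.vecMulVec (v (k + 1)) (star r) + L * (chainMat k u)ᴴ)).charpoly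
        * (X - C lam0) ^ (2 * k + 1)
      = A.charpoly * (X - C lam1) ^ (2 * k + 1) := by
  have hv : A.IsJordanChain lam0 v (2 * k + 1) := ⟨hv1, hvS⟩
  have hu : Aᵀ.IsJordanChain lam0 (fun i => star (u i)) (2 * k + 1) :=
    ⟨by rwa [mulVec_transpose], fun i hi him => by rw [mulVec_transpose, huS i hi him]⟩
  have hτ : star (u (k + 1)) ⬝ᵥ v (k + 1) ≠ 0 :=
    hu.dotProduct_ne_zero_of_add_eq hv (star_ne_zero.mpr hu0) hv0 halg (by omega) (by omega)
      (by omega)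
  have hsr : star r = (star (u (k + 1)) ⬝ᵥ v (k + 1))⁻¹ • star (u (k + 1)) := by
    rw [hr, star_smul, star_inv₀, star_dotProduct, star_star]
  have hr0 : ∀ l, 1 ≤ l → l ≤ k → star r ⬝ᵥ v l = 0 := fun l hl hlk => by
    rw [hsr, smul_dotProduct, hu.dotProduct_eq_zero_of_add_le hv (by omega) hl (by omega),
      smul_zero]
  have hr1 : star r ⬝ᵥ v (k + 1) = 1 := by
    rw [hsr, smul_dotProduct, smul_eq_mul, inv_mul_cancel₀ hτ]
  exact charpoly_mul_pow_eq_of_det_eq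
    ((rootMultiplicity_pos A.charpoly_monic.ne_zero).mp (by omega))
    fun x hx hS => det_scalar_sub_add_oddShift hv hu hR hL hr0 hr1 hx hS _

/-- Odd-multiplicity shift: the rank-`(2k+1)` update replaces the `2k+1` copies
of `λ₀` by `2k+1` copies of `λ₁` in the characteristic polynomial. -/
theorem odd_shift_charpoly {n k : ℕ}
    (A : Matrix (Fin n) (Fin n) ℂ) (lam0 lam1 : ℂ)
    (u v : ℕ → Fin n → ℂ)
    (hk : 1 ≤ k)
    (halg : (Matrix.charpoly A).rootMultiplicity lam0 = 2 * k + 1)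
    (hgeo : Module.finrank ℂ
      ↥(LinearMap.ker ((A - lam0 • (1 : Matrix (Fin n) (Fin n) ℂ)).mulVecLin)) = 1)
    (hu0 : u 1 ≠ 0) (hv0 : v 1 ≠ 0)
    (hu1 : Matrix.vecMul (star (u 1)) A = lam0 • star (u 1))
    (huS : ∀ i, 1 ≤ i → i + 1 ≤ 2 * k + 1 →
      Matrix.vecMul (star (u (i + 1))) A = lam0 • star (u (i + 1)) + star (u i))
    (hv1 : A.mulVec (v 1) = lam0 • v 1)
    (hvS : ∀ j, 1 ≤ j → j + 1 ≤ 2 * k + 1 →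
      A.mulVec (v (j + 1)) = lam0 • v (j + 1) + v j)
    (R L : Matrix (Fin n) (Fin k) ℂ)
    (hR : Rᴴ * chainMat k v = 1)
    (hL : (chainMat k u)ᴴ * L = 1)
    (r : Fin n → ℂ)
    (hr : r = (dotProduct (star (v (k + 1))) (u (k + 1)))⁻¹ • u (k + 1)) :
    (A + (lam1 - lam0) • (chainMat k v * Rᴴ
        + Matrix.vecMulVec (v (k + 1)) (star r) + L * (chainMat k u)ᴴ)).charpoly
        * (X - C lam0) ^ (2 * k + 1)
      = A.charpoly * (X - C lam1) ^ (2 * k + 1) :=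
  odd_shift_charpoly_general A lam0 lam1 u v halg hu0 hv0 hu1 huS hv1 hvS R L hR hL r hr
end
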